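/- Let p(·) ∈ P(0,∞) with p(·) ∈ LH₀(0,∞) ∩ LH_∞(0,∞) and 1 < p⁻ ≤ p⁺ < ∞, and let w ∈ A_{p(·),0}. Then there exist constants c₁,c₂>0 such that for every b>0 with ‖wχ_{(0,b)}‖_{p(·)} ≥ 1, one has c₁ W(0,b)^{1/p_∞} ≤ ‖wχ_{(0,b)}‖_{p(·)} ≤ c₂ W(0,b)^{1/p_∞}, where W(0,b)=∫₀^b w(x)^{p(x)}dx and p_∞ = lim_{x→∞} p(x). -/

import Mathlib

open MeasureTheory Set ENNReal Real

noncomputable section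

/-- ENNReal-valued Luxemburg norm over `(0,∞)` for `ℝ≥0∞`-valued functions. -/
def eLux (p : ℝ → ℝ) (g : ℝ → ℝ≥0∞) : ℝ≥0∞ :=
  sInf {μ : ℝ≥0∞ | 0 < μ ∧ ∫⁻ x in Ioi (0:ℝ), (g x / μ) ^ (p x) ≤ 1}

/-- Luxemburg norm for real-valued functions on `(0,∞)`. -/
def lux (p : ℝ → ℝ) (f : ℝ → ℝ) : ℝ≥0∞ :=
  eLux p (fun x => ENNReal.ofReal |f x|)

/-- pointwise conjugate exponent, `1/p(x) + 1/p'(x) = 1` -/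
def conj (p : ℝ → ℝ) : ℝ → ℝ := fun x => p x / (p x - 1)

/-- `p(·) ∈ P(0,∞)`: measurable exponent with values in `[1,∞)` and `p⁺ < ∞`. -/
def IsExponent (p : ℝ → ℝ) : Prop :=
  Measurable p ∧ (∀ x ∈ Ioi (0:ℝ), 1 ≤ p x) ∧ BddAbove (p '' Ioi (0:ℝ))

def pMinus (p : ℝ → ℝ) : ℝ := sInf (p '' Ioi (0:ℝ))
def pPlus (p : ℝ → ℝ) : ℝ := sSup (p '' Ioi (0:ℝ))
def pMinusOn (p : ℝ → ℝ) (E : Set ℝ) : ℝ := sInf (p '' E)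
def pPlusOn (p : ℝ → ℝ) (E : Set ℝ) : ℝ := sSup (p '' E)

/-- log-Hölder continuity at the origin. -/
def LH0 (p : ℝ → ℝ) : Prop :=
  ∃ C₀ > (0:ℝ), ∃ p₀ ≥ (1:ℝ), ∀ x ∈ Ioo (0:ℝ) (1/2 : ℝ), |p x - p₀| ≤ C₀ / (-Real.log x)

/-- log-Hölder continuity at infinity with given limit `pinf`. -/
def LHinfWith (p : ℝ → ℝ) (pinf : ℝ) : Prop :=
  ∃ C > (0:ℝ), ∀ x ∈ Ioi (0:ℝ), |p x - pinf| ≤ C / Real.log (Real.exp 1 + x)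

/-- log-Hölder continuity at infinity. -/
def LHinf (p : ℝ → ℝ) : Prop := ∃ pinf ≥ (1:ℝ), LHinfWith p pinf

/-- a weight on `(0,∞)`: non-negative, locally integrable, a.e. positive and finite. -/
def IsWeight (w : ℝ → ℝ) : Prop :=
  Measurable w ∧ (∀ x ∈ Ioi (0:ℝ), 0 ≤ w x) ∧
    (∀ᵐ x ∂(volume.restrict (Ioi (0:ℝ))), 0 < w x) ∧
    LocallyIntegrableOn w (Ioi (0:ℝ))

/-- the class `A_{p(·),q(·),0}` with parameter `λ`. -/
def Apq0 (p q : ℝ → ℝ) (lam : ℝ) (w : ℝ → ℝ) : Prop :=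
  ∃ C > (0:ℝ), ∀ b > (0:ℝ),
    lux q (indicator (Ioo (0:ℝ) b) w) *
      lux (conj p) (indicator (Ioo (0:ℝ) b) (fun y => (w y)⁻¹))
    ≤ ENNReal.ofReal (C * b ^ lam)

/-- the class `A_{p(·),0}`. -/
def Ap0 (p : ℝ → ℝ) (w : ℝ → ℝ) : Prop := Apq0 p p 1 w

/-- the maximal operator `N`. -/
def opN (f : ℝ → ℝ) (x : ℝ) : ℝ≥0∞ :=
  ⨆ (b : ℝ) (_ : x < b), (∫⁻ y in Ioo (0:ℝ) b, ENNReal.ofReal |f y|) / ENNReal.ofReal b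

/-- the generalized Stieltjes transform `S_λ`. -/
def opS (lam : ℝ) (f : ℝ → ℝ) (x : ℝ) : ℝ≥0∞ :=
  ∫⁻ y in Ioi (0:ℝ), ENNReal.ofReal (|f y| / (x + y) ^ lam)

/-- the Hardy operator `H_λ`. -/
def opH (lam : ℝ) (f : ℝ → ℝ) (x : ℝ) : ℝ≥0∞ :=
  (∫⁻ y in Ioo (0:ℝ) x, ENNReal.ofReal |f y|) / ENNReal.ofReal (x ^ lam)

/-- the adjoint Hardy operator `H*_λ`. -/
def opHstar (lam : ℝ) (f : ℝ → ℝ) (x : ℝ) : ℝ≥0∞ :=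
  ∫⁻ y in Ioi x, ENNReal.ofReal (|f y| / y ^ lam)

/-- the generalized Calderón operator `𝒞_λ = H_λ + H*_λ`. -/
def opC (lam : ℝ) (f : ℝ → ℝ) (x : ℝ) : ℝ≥0∞ := opH lam f x + opHstar lam f x

/-- the operator `𝒞^α`, sum of the Riemann–Liouville and Weyl averaging operators. -/
def opCalpha (α : ℝ) (f : ℝ → ℝ) (t : ℝ) : ℝ≥0∞ :=
  ENNReal.ofReal (α + 1) *
      ((∫⁻ x in Ioo (0:ℝ) t, ENNReal.ofReal ((t - x) ^ α * |f x|)) /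
        ENNReal.ofReal (t ^ (α + 1)))
    + ENNReal.ofReal (α + 1) *
        ∫⁻ x in Ioi t, ENNReal.ofReal ((x - t) ^ α / x ^ (α + 1) * |f x|)

/-- the operator `S^α`. -/
def opSalpha (α : ℝ) (f : ℝ → ℝ) (x : ℝ) : ℝ≥0∞ :=
  ∫⁻ t in Ioi (0:ℝ), ENNReal.ofReal (|x - t| ^ α / (x + t) ^ (α + 1) * |f t|)

/-- `T` is of strong type `(p(·),q(·))` with respect to `w`. -/
def StrongType (p q : ℝ → ℝ) (w : ℝ → ℝ) (T : (ℝ → ℝ) → ℝ → ℝ≥0∞) : Prop :=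
  ∃ K > (0:ℝ), ∀ f : ℝ → ℝ, Measurable f → lux p (fun x => f x * w x) ≠ ∞ →
    eLux q (fun x => T f x * ENNReal.ofReal (w x)) ≤
      ENNReal.ofReal K * lux p (fun x => f x * w x)

/-- `T` is of weak type `(p(·),q(·))` with respect to `w`. -/
def WeakType (p q : ℝ → ℝ) (w : ℝ → ℝ) (T : (ℝ → ℝ) → ℝ → ℝ≥0∞) : Prop :=
  ∃ K > (0:ℝ), ∀ f : ℝ → ℝ, Measurable f → lux p (fun x => f x * w x) ≠ ∞ →
    ∀ μ : ℝ, 0 < μ →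
      ENNReal.ofReal μ *
          lux q (indicator {x | ENNReal.ofReal μ < T f x} w) ≤
        ENNReal.ofReal K * lux p (fun x => f x * w x)


/-!
Write `N(b)` for the Luxemburg norm of `w χ_(0,b)` and `W(b) = ∫₀^b w^p`. The `A_{p(·),0}`
condition, together with the positivity of the norm of `w⁻¹ χ_(0,1)`, gives `N(s) ≲ s`, hence
`W(s) ≲ s^{p⁺}` for `s ≥ 1`. For `m ≥ 1` split `(0,b)` at `s = m^{1/(2p⁺)}`: on `(0,2s)` the growth
bound costs only `√m`, while beyond `s` log-Hölder continuity at infinity gives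
`m^{±p(x)} ≤ e^{2p⁺C} m^{±p_∞}`. So the modular of `w χ_(0,b) / m` is
`≲ m^{-1/2} + m^{-p_∞} W(b)`, and `W(b) ≲ √m + m^{p_∞}` whenever that modular is at most one.
Choosing `m ≈ W(b)^{1/p_∞}`, resp. `m = 2 N(b)`, gives the two inequalities.
-/
def modular (q : ℝ → ℝ) (g : ℝ → ℝ≥0∞) : ℝ≥0∞ := ∫⁻ x in Ioi (0:ℝ), g x ^ q x

section LuxemburgNorm

variable {q : ℝ → ℝ} {g : ℝ → ℝ≥0∞} {μ : ℝ≥0∞} {P : ℝ}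

lemma eLux_le_of_modular_div_le_one (hμ : 0 < μ) (h : modular q (fun x => g x / μ) ≤ 1) :
    eLux q g ≤ μ :=
  sInf_le ⟨hμ, h⟩

lemma modular_div_le_one_of_eLux_lt (hq : ∀ x ∈ Ioi (0:ℝ), 0 ≤ q x) (h : eLux q g < μ) :
    modular q (fun x => g x / μ) ≤ 1 := by
  obtain ⟨ν, ⟨-, hν⟩, hνμ⟩ := sInf_lt_iff.mp h
  refine le_trans (setLIntegral_mono' measurableSet_Ioi fun x hx => ?_) hν
  exact ENNReal.rpow_le_rpow (ENNReal.div_le_div_left hνμ.le _) (hq x hx)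

lemma eLux_mono {g' : ℝ → ℝ≥0∞} (hq : ∀ x ∈ Ioi (0:ℝ), 0 ≤ q x)
    (h : ∀ x ∈ Ioi (0:ℝ), g x ≤ g' x) : eLux q g ≤ eLux q g' := by
  refine sInf_le_sInf fun μ ⟨hμ, hmod⟩ => ⟨hμ, le_trans ?_ hmod⟩
  exact setLIntegral_mono' measurableSet_Ioi fun x hx =>
    ENNReal.rpow_le_rpow (ENNReal.div_le_div_right (h x hx) _) (hq x hx)

lemma modular_le_max_rpow_of_modular_div_le_one (hq : ∀ x ∈ Ioi (0:ℝ), q x ∈ Icc 0 P)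
    (hP : 0 < P) (hμ : 0 < μ) (h : modular q (fun x => g x / μ) ≤ 1) :
    modular q g ≤ max 1 (μ ^ P) := by
  rcases eq_or_ne μ ∞ with rfl | hμtop
  · simp [ENNReal.top_rpow_of_pos hP]
  calc modular q g ≤ ∫⁻ x in Ioi (0:ℝ), (g x / μ) ^ q x * max 1 (μ ^ P) := by
        refine setLIntegral_mono' measurableSet_Ioi fun x hx => ?_
        obtain ⟨hq0, hqP⟩ := hq x hx
        calc g x ^ q x = (g x / μ) ^ q x * μ ^ q x := by
              rw [← ENNReal.mul_rpow_of_nonneg _ _ hq0, ENNReal.div_mul_cancel hμ.ne' hμtop]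
          _ ≤ (g x / μ) ^ q x * max 1 (μ ^ P) := by
              gcongr
              rcases le_total 1 μ with h1 | h1
              · exact le_max_of_le_right (ENNReal.rpow_le_rpow_of_exponent_le h1 hqP)
              · exact le_max_of_le_left (ENNReal.rpow_le_one h1 hq0)
    _ = modular q (fun x => g x / μ) * max 1 (μ ^ P) :=
        lintegral_mul_const' _ _ (max_lt one_lt_top (rpow_lt_top_of_nonneg hP.le hμtop)).ne
    _ ≤ max 1 (μ ^ P) := mul_le_of_le_one_left' h

lemma modular_le_max_eLux_rpow (hq : ∀ x ∈ Ioi (0:ℝ), q x ∈ Icc 0 P) (hP : 0 < P) :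
    modular q g ≤ max 1 (eLux q g ^ P) := by
  rcases le_or_gt (modular q g) 1 with h1 | h1
  · exact le_max_of_le_left h1
  refine le_max_of_le_right ((ENNReal.rpow_inv_le_iff hP).mp (le_sInf ?_))
  rintro μ ⟨hμ, hmod⟩
  refine (ENNReal.rpow_inv_le_iff hP).mpr ?_
  exact (le_max_iff.mp (modular_le_max_rpow_of_modular_div_le_one hq hP hμ hmod)).resolve_left
    h1.not_ge

lemma modular_div_le_inv_rpow_mul (hq : ∀ x ∈ Ioi (0:ℝ), q x ∈ Icc 0 P) (hP : 0 < P)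
    (hμ0 : μ ≠ 0) (hμ1 : μ ≤ 1) :
    modular q (fun x => g x / μ) ≤ μ⁻¹ ^ P * modular q g := by
  unfold modular
  rw [← lintegral_const_mul' _ _ (rpow_ne_top_of_nonneg hP.le (inv_ne_top.mpr hμ0))]
  refine setLIntegral_mono' measurableSet_Ioi fun x hx => ?_
  obtain ⟨hq0, hqP⟩ := hq x hx
  dsimp only
  rw [div_eq_mul_inv, ENNReal.mul_rpow_of_nonneg _ _ hq0, mul_comm]
  gcongr
  exact ENNReal.one_le_inv.mpr hμ1

lemma one_le_modular_of_one_le_eLux (hq : ∀ x ∈ Ioi (0:ℝ), q x ∈ Icc 0 P) (hP : 0 < P)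
    (h : 1 ≤ eLux q g) : 1 ≤ modular q g := by
  by_contra! hlt
  -- the `2⁻¹` keeps `μ` positive when `modular q g = 0`
  set μ : ℝ≥0∞ := max (modular q g ^ P⁻¹) 2⁻¹
  have hμ1 : μ < 1 := max_lt (rpow_lt_one hlt (inv_pos.mpr hP)) (ENNReal.inv_lt_one.mpr one_lt_two)
  have hμ0 : μ ≠ 0 := (lt_of_lt_of_le (by simp) (le_max_right _ _)).ne'
  have hμtop : μ ≠ ∞ := (hμ1.trans one_lt_top).ne
  have hmodP : modular q g ≤ μ ^ P := (ENNReal.rpow_inv_le_iff hP).mp (le_max_left _ _)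
  have hmod : modular q (fun x => g x / μ) ≤ 1 :=
    calc modular q (fun x => g x / μ) ≤ μ⁻¹ ^ P * modular q g :=
          modular_div_le_inv_rpow_mul hq hP hμ0 hμ1.le
      _ ≤ (μ ^ P)⁻¹ * μ ^ P := by rw [ENNReal.inv_rpow]; gcongr
      _ = 1 := ENNReal.inv_mul_cancel (by positivity) (rpow_ne_top_of_nonneg hP.le hμtop)
  exact (h.trans (eLux_le_of_modular_div_le_one (pos_iff_ne_zero.mpr hμ0) hmod)).not_gt hμ1

lemma eLux_pos_of_le_on (hq : ∀ x ∈ Ioi (0:ℝ), 1 ≤ q x) {A : Set ℝ} (hAm : MeasurableSet A)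
    (hA : A ⊆ Ioi 0) (hA0 : volume A ≠ 0) {η : ℝ≥0∞} (hη : η ≠ 0)
    (hg : ∀ x ∈ A, η ≤ g x) : 0 < eLux q g := by
  refine lt_of_lt_of_le (lt_min (pos_iff_ne_zero.mpr hη) (ENNReal.mul_pos hη hA0)) (le_sInf ?_)
  rintro μ ⟨hμ, hmod⟩
  rcases le_or_gt η μ with hημ | hμη
  · exact min_le_of_left_le hημ
  have hμtop : μ ≠ ∞ := hμη.ne_top
  have hone : 1 ≤ η / μ := (ENNReal.le_div_iff_mul_le (.inl hμ.ne') (.inl hμtop)).mpr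
    (by rw [one_mul]; exact hμη.le)
  have hpow : ∀ x ∈ A, η / μ ≤ (g x / μ) ^ q x := fun x hx => by
    have hbase : η / μ ≤ g x / μ := ENNReal.div_le_div_right (hg x hx) _
    calc η / μ ≤ g x / μ := hbase
      _ = (g x / μ) ^ (1:ℝ) := (ENNReal.rpow_one _).symm
      _ ≤ (g x / μ) ^ q x := ENNReal.rpow_le_rpow_of_exponent_le (hone.trans hbase) (hq x (hA hx))
  have hvol : η / μ * volume A ≤ 1 := calc
    η / μ * volume A = ∫⁻ _ in A, η / μ := (setLIntegral_const _ _).symm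
    _ ≤ ∫⁻ x in A, (g x / μ) ^ q x := setLIntegral_mono' hAm hpow
    _ ≤ modular q (fun x => g x / μ) := lintegral_mono_set hA
    _ ≤ 1 := hmod
  rw [← ENNReal.mul_div_right_comm, ENNReal.div_le_iff hμ.ne' hμtop, one_mul] at hvol
  exact min_le_of_right_le hvol

end LuxemburgNorm

section TruncatedWeight

variable {p q w v : ℝ → ℝ} {b m P : ℝ}

lemma modular_indicator_div_ofReal (hw0 : ∀ x ∈ Ioi (0:ℝ), 0 ≤ w x)
    (hp : ∀ x ∈ Ioi (0:ℝ), 0 < p x) (hm : 0 < m) (b : ℝ) :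
    modular p (fun x => ENNReal.ofReal |(Ioo 0 b).indicator w x| / ENNReal.ofReal m) =
      ∫⁻ x in Ioo 0 b, ENNReal.ofReal ((w x / m) ^ p x) := by
  conv_rhs => rw [← inter_eq_left.mpr (Ioo_subset_Ioi_self : Ioo 0 b ⊆ Ioi 0),
    ← setLIntegral_indicator measurableSet_Ioo]
  refine setLIntegral_congr_fun measurableSet_Ioi fun x hx => ?_
  by_cases hxb : x ∈ Ioo 0 b
  · simp [hxb, abs_of_nonneg (hw0 x hx), ← ENNReal.ofReal_div_of_pos hm,
      ENNReal.ofReal_rpow_of_nonneg (div_nonneg (hw0 x hx) hm.le) (hp x hx).le]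
  · simp [hxb, ENNReal.zero_rpow_of_pos (hp x hx)]

lemma modular_indicator (hw0 : ∀ x ∈ Ioi (0:ℝ), 0 ≤ w x)
    (hp : ∀ x ∈ Ioi (0:ℝ), 0 < p x) (b : ℝ) :
    modular p (fun x => ENNReal.ofReal |(Ioo 0 b).indicator w x|) =
      ∫⁻ x in Ioo 0 b, ENNReal.ofReal (w x ^ p x) := by
  simpa using modular_indicator_div_ofReal hw0 hp one_pos b

lemma lux_indicator_le_ofReal (hw0 : ∀ x ∈ Ioi (0:ℝ), 0 ≤ w x)
    (hp : ∀ x ∈ Ioi (0:ℝ), 0 < p x) (hm : 0 < m)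
    (h : ∫⁻ x in Ioo 0 b, ENNReal.ofReal ((w x / m) ^ p x) ≤ 1) :
    lux p ((Ioo 0 b).indicator w) ≤ ENNReal.ofReal m :=
  eLux_le_of_modular_div_le_one (ENNReal.ofReal_pos.mpr hm)
    (by rwa [modular_indicator_div_ofReal hw0 hp hm])

lemma setLIntegral_div_rpow_le_one (hw0 : ∀ x ∈ Ioi (0:ℝ), 0 ≤ w x)
    (hp : ∀ x ∈ Ioi (0:ℝ), 0 < p x) (hm : 0 < m)
    (h : lux p ((Ioo 0 b).indicator w) < ENNReal.ofReal m) :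
    ∫⁻ x in Ioo 0 b, ENNReal.ofReal ((w x / m) ^ p x) ≤ 1 := by
  rw [← modular_indicator_div_ofReal hw0 hp hm]
  exact modular_div_le_one_of_eLux_lt (fun x hx => (hp x hx).le) h

lemma setLIntegral_rpow_le_max (hw0 : ∀ x ∈ Ioi (0:ℝ), 0 ≤ w x)
    (hp : ∀ x ∈ Ioi (0:ℝ), p x ∈ Ioc 0 P) (hP : 0 < P) (b : ℝ) :
    ∫⁻ x in Ioo 0 b, ENNReal.ofReal (w x ^ p x) ≤
      max 1 (lux p ((Ioo 0 b).indicator w) ^ P) := by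
  rw [← modular_indicator hw0 (fun x hx => (hp x hx).1)]
  exact modular_le_max_eLux_rpow (fun x hx => Ioc_subset_Icc_self (hp x hx)) hP

lemma setLIntegral_rpow_ne_top (hw0 : ∀ x ∈ Ioi (0:ℝ), 0 ≤ w x)
    (hp : ∀ x ∈ Ioi (0:ℝ), p x ∈ Ioc 0 P) (hP : 0 < P)
    (h : lux p ((Ioo 0 b).indicator w) ≠ ∞) :
    ∫⁻ x in Ioo 0 b, ENNReal.ofReal (w x ^ p x) ≠ ∞ :=
  ((setLIntegral_rpow_le_max hw0 hp hP b).trans_lt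
    (max_lt one_lt_top (rpow_lt_top_of_nonneg hP.le h))).ne

lemma one_le_setLIntegral_rpow (hw0 : ∀ x ∈ Ioi (0:ℝ), 0 ≤ w x)
    (hp : ∀ x ∈ Ioi (0:ℝ), p x ∈ Ioc 0 P) (hP : 0 < P)
    (h : 1 ≤ lux p ((Ioo 0 b).indicator w)) :
    1 ≤ ∫⁻ x in Ioo 0 b, ENNReal.ofReal (w x ^ p x) := by
  rw [← modular_indicator hw0 (fun x hx => (hp x hx).1)]
  exact one_le_modular_of_one_le_eLux (fun x hx => Ioc_subset_Icc_self (hp x hx)) hP h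

lemma lux_indicator_mono (hq : ∀ x ∈ Ioi (0:ℝ), 0 ≤ q x) {b' : ℝ} (hb : b ≤ b') :
    lux q ((Ioo 0 b).indicator v) ≤ lux q ((Ioo 0 b').indicator v) := by
  refine eLux_mono hq fun x _ => ENNReal.ofReal_le_ofReal ?_
  by_cases hxb : x ∈ Ioo 0 b
  · rw [indicator_of_mem hxb, indicator_of_mem (Ioo_subset_Ioo_right hb hxb)]
  · simp [hxb]

lemma lux_indicator_pos (hq : ∀ x ∈ Ioi (0:ℝ), 1 ≤ q x) (hv : Measurable v)
    (hvpos : ∀ᵐ x ∂(volume.restrict (Ioi (0:ℝ))), 0 < v x) (hb : 0 < b) :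
    0 < lux q ((Ioo 0 b).indicator v) := by
  set A : ℕ → Set ℝ := fun n => Ioo 0 b ∩ {x | 1 / (n + 1) ≤ v x}
  have hcover : Ioo 0 b ⊆ (⋃ n, A n) ∪ {x | ¬ 0 < v x} := fun x hx => by
    by_cases hvx : 0 < v x
    · obtain ⟨n, hn⟩ := exists_nat_one_div_lt hvx
      exact Or.inl (mem_iUnion.mpr ⟨n, hx, hn.le⟩)
    · exact Or.inr hvx
  obtain ⟨n, hn⟩ : ∃ n, volume.restrict (Ioi (0:ℝ)) (A n) ≠ 0 := by
    by_contra! hnull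
    have : volume.restrict (Ioi (0:ℝ)) (Ioo 0 b) = 0 :=
      measure_mono_null hcover (measure_union_null (measure_iUnion_null hnull) (ae_iff.mp hvpos))
    rw [Measure.restrict_apply measurableSet_Ioo, inter_eq_left.mpr Ioo_subset_Ioi_self,
      Real.volume_Ioo, sub_zero, ENNReal.ofReal_eq_zero] at this
    exact this.not_gt hb
  refine eLux_pos_of_le_on hq (measurableSet_Ioo.inter (measurableSet_le measurable_const hv))
    (fun x hx => hx.1.1) (fun h0 => hn (Measure.restrict_le_self.absolutelyContinuous h0))
    (η := ENNReal.ofReal (1 / (n + 1))) (ENNReal.ofReal_pos.mpr (by positivity)).ne' fun x hx => ?_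
  rw [indicator_of_mem hx.1]
  exact ENNReal.ofReal_le_ofReal (hx.2.trans (le_abs_self _))

end TruncatedWeight

lemma one_le_conj {p : ℝ → ℝ} {x : ℝ} (h : 1 < p x) : 1 ≤ conj p x := by
  rw [conj, le_div_iff₀ (by linarith)]
  linarith

lemma lux_conj_indicator_inv_pos {p w : ℝ → ℝ} {b : ℝ} (hp : ∀ x ∈ Ioi (0:ℝ), 1 < p x)
    (hwm : Measurable w) (hwpos : ∀ᵐ x ∂(volume.restrict (Ioi (0:ℝ))), 0 < w x) (hb : 0 < b) :
    0 < lux (conj p) ((Ioo 0 b).indicator fun y => (w y)⁻¹) :=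
  lux_indicator_pos (fun x hx => one_le_conj (hp x hx)) hwm.inv
    (hwpos.mono fun _ hx => inv_pos.mpr hx) hb

namespace Ap0

variable {p w : ℝ → ℝ} {b P : ℝ}

lemma lux_indicator_ne_top (hA : Ap0 p w) (hp : ∀ x ∈ Ioi (0:ℝ), 1 < p x)
    (hwm : Measurable w) (hwpos : ∀ᵐ x ∂(volume.restrict (Ioi (0:ℝ))), 0 < w x) (hb : 0 < b) :
    lux p ((Ioo 0 b).indicator w) ≠ ∞ := by
  obtain ⟨C, -, hC⟩ := hA
  intro htop
  have h := hC b hb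
  rw [htop, ENNReal.top_mul (lux_conj_indicator_inv_pos hp hwm hwpos hb).ne', top_le_iff] at h
  exact ENNReal.ofReal_ne_top h

lemma exists_lux_indicator_le (hA : Ap0 p w) (hp : ∀ x ∈ Ioi (0:ℝ), 1 < p x)
    (hwm : Measurable w) (hwpos : ∀ᵐ x ∂(volume.restrict (Ioi (0:ℝ))), 0 < w x) :
    ∃ A : ℝ, ∀ s ≥ 1, lux p ((Ioo 0 s).indicator w) ≤ ENNReal.ofReal (A * s) := by
  obtain ⟨C, hC0, hC⟩ := hA
  set β := lux (conj p) ((Ioo 0 1).indicator fun y => (w y)⁻¹)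
  have hβ : 0 < β := lux_conj_indicator_inv_pos hp hwm hwpos one_pos
  refine ⟨(ENNReal.ofReal C / β).toReal, fun s hs => ?_⟩
  have hβs : β ≤ lux (conj p) ((Ioo 0 s).indicator fun y => (w y)⁻¹) :=
    lux_indicator_mono (fun x hx => zero_le_one.trans (one_le_conj (hp x hx))) hs
  calc lux p ((Ioo 0 s).indicator w) ≤ ENNReal.ofReal (C * s) / β := by
        refine (ENNReal.le_div_iff_mul_le (.inl hβ.ne') (.inr ENNReal.ofReal_ne_top)).mpr ?_
        simpa using (mul_le_mul_right hβs _).trans (hC s (by linarith))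
    _ = ENNReal.ofReal ((ENNReal.ofReal C / β).toReal * s) := by
        rw [ENNReal.ofReal_mul ENNReal.toReal_nonneg,
          ENNReal.ofReal_toReal (ENNReal.div_ne_top ENNReal.ofReal_ne_top hβ.ne'),
          ENNReal.ofReal_mul hC0.le, ENNReal.mul_div_right_comm]

lemma exists_setLIntegral_rpow_le (hA : Ap0 p w) (hp : ∀ x ∈ Ioi (0:ℝ), 1 < p x)
    (hpP : ∀ x ∈ Ioi (0:ℝ), p x ≤ P) (hw0 : ∀ x ∈ Ioi (0:ℝ), 0 ≤ w x) (hwm : Measurable w)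
    (hwpos : ∀ᵐ x ∂(volume.restrict (Ioi (0:ℝ))), 0 < w x) :
    ∃ A ≥ (1:ℝ), ∀ s ≥ 1,
      ∫⁻ x in Ioo 0 s, ENNReal.ofReal (w x ^ p x) ≤ ENNReal.ofReal ((A * s) ^ P) := by
  have h1 : (1:ℝ) ∈ Ioi 0 := mem_Ioi.mpr one_pos
  have hP : 0 < P := one_pos.trans ((hp 1 h1).trans_le (hpP 1 h1))
  obtain ⟨A, hA⟩ := hA.exists_lux_indicator_le hp hwm hwpos
  refine ⟨max A 1, le_max_right _ _, fun s hs => ?_⟩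
  have hAs : 1 ≤ max A 1 * s := one_le_mul_of_one_le_of_one_le (le_max_right _ _) hs
  refine (setLIntegral_rpow_le_max hw0 (fun x hx => ⟨one_pos.trans (hp x hx), hpP x hx⟩) hP s).trans
    (max_le (ENNReal.one_le_ofReal.mpr (Real.one_le_rpow hAs hP.le)) ?_)
  rw [← ENNReal.ofReal_rpow_of_nonneg (by positivity) hP.le]
  gcongr
  exact (hA s hs).trans (ENNReal.ofReal_le_ofReal (by gcongr; exact le_max_left _ _))

end Ap0

lemma rpow_le_exp_mul_rpow {m x a c Ci k : ℝ} (hCi : 0 ≤ Ci)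
    (hac : |a - c| ≤ Ci / Real.log (Real.exp 1 + x)) (hm : 1 ≤ m) (hk : 0 < k)
    (hx : m ^ k⁻¹ ≤ x) :
    m ^ a ≤ Real.exp (k * Ci) * m ^ c := by
  have hm0 : 0 < m := one_pos.trans_le hm
  have hx0 : 0 < x := (Real.rpow_pos_of_pos hm0 _).trans_le hx
  set L := Real.log (Real.exp 1 + x)
  have hL : 0 < L := Real.log_pos (by linarith [Real.add_one_le_exp 1])
  have hkL : Real.log m ≤ k * L := by
    have : k⁻¹ * Real.log m ≤ L := by
      rw [← Real.log_rpow hm0]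
      exact Real.log_le_log (Real.rpow_pos_of_pos hm0 _) (by linarith [Real.exp_pos 1])
    rwa [inv_mul_le_iff₀ hk] at this
  have hlog : Real.log m * |a - c| ≤ k * Ci := calc
    Real.log m * |a - c| ≤ Real.log m * (Ci / L) := by gcongr; exact Real.log_nonneg hm
    _ ≤ k * L * (Ci / L) := by gcongr
    _ = k * Ci := by field_simp
  calc m ^ a ≤ m ^ (c + |a - c|) :=
        Real.rpow_le_rpow_of_exponent_le hm (by linarith [le_abs_self (a - c)])
    _ = m ^ |a - c| * m ^ c := by rw [Real.rpow_add hm0, mul_comm]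
    _ ≤ Real.exp (k * Ci) * m ^ c := by
        gcongr
        rw [Real.rpow_def_of_pos hm0]
        exact Real.exp_le_exp.mpr hlog

lemma setLIntegral_ofReal_le_mul {R : Set ℝ} (hR : MeasurableSet R) {f g : ℝ → ℝ} {c : ℝ}
    (hc : 0 ≤ c) (h : ∀ x ∈ R, f x ≤ c * g x) :
    ∫⁻ x in R, ENNReal.ofReal (f x) ≤ ENNReal.ofReal c * ∫⁻ x in R, ENNReal.ofReal (g x) := by
  rw [← lintegral_const_mul' _ _ ENNReal.ofReal_ne_top]
  exact setLIntegral_mono' hR fun x hx =>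
    (ENNReal.ofReal_le_ofReal (h x hx)).trans_eq (ENNReal.ofReal_mul hc)

lemma setLIntegral_Ioo_le_add (f : ℝ → ℝ≥0∞) {b s : ℝ} (hs : 0 < s) :
    ∫⁻ x in Ioo 0 b, f x ≤ (∫⁻ x in Ioo 0 (2 * s), f x) + ∫⁻ x in Ioo 0 b ∩ Ioi s, f x := by
  refine le_trans (lintegral_mono_set ?_) (lintegral_union_le f _ _)
  intro x hx
  rcases le_or_gt x s with hxs | hxs
  · exact Or.inl ⟨hx.1, by linarith⟩
  · exact Or.inr ⟨hx, hxs⟩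

section LogHolderAtInfinity

variable {p w : ℝ → ℝ} {pinf Ci A P m b : ℝ}

lemma setLIntegral_rpow_le_sqrt (hP : 0 < P) (hA : 0 ≤ A)
    (hgrowth : ∀ s ≥ 1, ∫⁻ x in Ioo 0 s, ENNReal.ofReal (w x ^ p x) ≤ ENNReal.ofReal ((A * s) ^ P))
    (hm : 1 ≤ m) :
    ∫⁻ x in Ioo 0 (2 * m ^ (2 * P)⁻¹), ENNReal.ofReal (w x ^ p x) ≤
      ENNReal.ofReal ((2 * A) ^ P * √m) := by
  have hm0 : 0 ≤ m := zero_le_one.trans hm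
  refine (hgrowth _ ?_).trans_eq ?_
  · linarith [Real.one_le_rpow hm (inv_nonneg.mpr (by positivity : (0:ℝ) ≤ 2 * P))]
  · rw [← mul_assoc, mul_comm A, Real.mul_rpow (by positivity) (by positivity), ← Real.rpow_mul hm0,
      inv_mul_eq_div, div_mul_cancel_right₀ hP.ne', Real.sqrt_eq_rpow, one_div]

lemma setLIntegral_div_rpow_le (hw0 : ∀ x ∈ Ioi (0:ℝ), 0 ≤ w x) (hp : ∀ x ∈ Ioi (0:ℝ), 1 ≤ p x)
    (hCi : 0 ≤ Ci) (hΔ : ∀ x ∈ Ioi (0:ℝ), |p x - pinf| ≤ Ci / Real.log (Real.exp 1 + x))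
    (hP : 0 < P) (hA : 0 ≤ A)
    (hgrowth : ∀ s ≥ 1, ∫⁻ x in Ioo 0 s, ENNReal.ofReal (w x ^ p x) ≤ ENNReal.ofReal ((A * s) ^ P))
    (hm : 1 ≤ m) :
    ∫⁻ x in Ioo 0 b, ENNReal.ofReal ((w x / m) ^ p x) ≤
      ENNReal.ofReal ((2 * A) ^ P / √m) +
        ENNReal.ofReal (Real.exp (2 * P * Ci) * m ^ (-pinf)) *
          ∫⁻ x in Ioo 0 b, ENNReal.ofReal (w x ^ p x) := by
  have hm0 : 0 < m := one_pos.trans_le hm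
  set s := m ^ (2 * P)⁻¹
  have hs : 0 < s := Real.rpow_pos_of_pos hm0 _
  refine (setLIntegral_Ioo_le_add _ hs).trans (add_le_add ?_ ?_)
  · calc ∫⁻ x in Ioo 0 (2 * s), ENNReal.ofReal ((w x / m) ^ p x)
          ≤ ENNReal.ofReal m⁻¹ * ∫⁻ x in Ioo 0 (2 * s), ENNReal.ofReal (w x ^ p x) := by
            refine setLIntegral_ofReal_le_mul measurableSet_Ioo (by positivity) fun x hx => ?_
            have hwx := hw0 x hx.1
            rw [Real.div_rpow hwx hm0.le, ← div_eq_inv_mul]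
            gcongr
            exact Real.self_le_rpow_of_one_le hm (hp x hx.1)
      _ ≤ ENNReal.ofReal m⁻¹ * ENNReal.ofReal ((2 * A) ^ P * √m) := by
            gcongr
            exact setLIntegral_rpow_le_sqrt hP hA hgrowth hm
      _ = ENNReal.ofReal ((2 * A) ^ P / √m) := by
            rw [← ENNReal.ofReal_mul (by positivity)]
            congr 1
            field_simp
            rw [Real.sq_sqrt hm0.le, mul_comm]
  · calc ∫⁻ x in Ioo 0 b ∩ Ioi s, ENNReal.ofReal ((w x / m) ^ p x)
          ≤ ENNReal.ofReal (Real.exp (2 * P * Ci) * m ^ (-pinf)) *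
              ∫⁻ x in Ioo 0 b ∩ Ioi s, ENNReal.ofReal (w x ^ p x) := by
            refine setLIntegral_ofReal_le_mul (measurableSet_Ioo.inter measurableSet_Ioi)
              (by positivity) fun x hx => ?_
            have hwx := hw0 x hx.1.1
            rw [Real.div_rpow hwx hm0.le, div_eq_mul_inv, ← Real.rpow_neg hm0.le, mul_comm]
            gcongr
            exact rpow_le_exp_mul_rpow hCi (by rw [neg_sub_neg, abs_sub_comm]; exact hΔ x hx.1.1)
              hm (by positivity) hx.2.le
      _ ≤ ENNReal.ofReal (Real.exp (2 * P * Ci) * m ^ (-pinf)) *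
              ∫⁻ x in Ioo 0 b, ENNReal.ofReal (w x ^ p x) := by
            gcongr
            exact inter_subset_left

lemma setLIntegral_rpow_le (hw0 : ∀ x ∈ Ioi (0:ℝ), 0 ≤ w x)
    (hCi : 0 ≤ Ci) (hΔ : ∀ x ∈ Ioi (0:ℝ), |p x - pinf| ≤ Ci / Real.log (Real.exp 1 + x))
    (hP : 0 < P) (hA : 0 ≤ A)
    (hgrowth : ∀ s ≥ 1, ∫⁻ x in Ioo 0 s, ENNReal.ofReal (w x ^ p x) ≤ ENNReal.ofReal ((A * s) ^ P))
    (hm : 1 ≤ m) :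
    ∫⁻ x in Ioo 0 b, ENNReal.ofReal (w x ^ p x) ≤
      ENNReal.ofReal ((2 * A) ^ P * √m) +
        ENNReal.ofReal (Real.exp (2 * P * Ci) * m ^ pinf) *
          ∫⁻ x in Ioo 0 b, ENNReal.ofReal ((w x / m) ^ p x) := by
  have hm0 : 0 < m := one_pos.trans_le hm
  set s := m ^ (2 * P)⁻¹
  refine (setLIntegral_Ioo_le_add _ (Real.rpow_pos_of_pos hm0 _)).trans
    (add_le_add (setLIntegral_rpow_le_sqrt hP hA hgrowth hm) ?_)
  calc ∫⁻ x in Ioo 0 b ∩ Ioi s, ENNReal.ofReal (w x ^ p x)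
      ≤ ENNReal.ofReal (Real.exp (2 * P * Ci) * m ^ pinf) *
          ∫⁻ x in Ioo 0 b ∩ Ioi s, ENNReal.ofReal ((w x / m) ^ p x) := by
        refine setLIntegral_ofReal_le_mul (measurableSet_Ioo.inter measurableSet_Ioi)
          (by positivity) fun x hx => ?_
        have hwx := hw0 x hx.1.1
        have hmp : 0 < m ^ p x := Real.rpow_pos_of_pos hm0 _
        rw [Real.div_rpow hwx hm0.le]
        calc w x ^ p x = m ^ p x * (w x ^ p x / m ^ p x) := by field_simp
          _ ≤ Real.exp (2 * P * Ci) * m ^ pinf * (w x ^ p x / m ^ p x) := by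
              gcongr
              exact rpow_le_exp_mul_rpow hCi (hΔ x hx.1.1) hm (by positivity) hx.2.le
    _ ≤ ENNReal.ofReal (Real.exp (2 * P * Ci) * m ^ pinf) *
          ∫⁻ x in Ioo 0 b, ENNReal.ofReal ((w x / m) ^ p x) := by
        gcongr
        exact inter_subset_left

end LogHolderAtInfinity

section TwoSidedBound

variable {p w : ℝ → ℝ} {pinf Ci A P b : ℝ}

lemma lux_indicator_le_mul_rpow (hw0 : ∀ x ∈ Ioi (0:ℝ), 0 ≤ w x)
    (hp : ∀ x ∈ Ioi (0:ℝ), 1 ≤ p x) (hCi : 0 ≤ Ci)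
    (hΔ : ∀ x ∈ Ioi (0:ℝ), |p x - pinf| ≤ Ci / Real.log (Real.exp 1 + x))
    (hP : 0 < P) (hA : 0 ≤ A) (hpinf : 0 < pinf)
    (hgrowth : ∀ s ≥ 1, ∫⁻ x in Ioo 0 s, ENNReal.ofReal (w x ^ p x) ≤ ENNReal.ofReal ((A * s) ^ P))
    (hW1 : 1 ≤ ∫⁻ x in Ioo 0 b, ENNReal.ofReal (w x ^ p x))
    (hWtop : ∫⁻ x in Ioo 0 b, ENNReal.ofReal (w x ^ p x) ≠ ∞) :
    lux p ((Ioo 0 b).indicator w) ≤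
      ENNReal.ofReal (max ((2 * (2 * A) ^ P) ^ 2) ((2 * Real.exp (2 * P * Ci)) ^ pinf⁻¹)) *
        (∫⁻ x in Ioo 0 b, ENNReal.ofReal (w x ^ p x)) ^ (1 / pinf) := by
  set D := (2 * A) ^ P
  set E := Real.exp (2 * P * Ci)
  set κ := max ((2 * D) ^ 2) ((2 * E) ^ pinf⁻¹)
  have hE : 1 ≤ E := Real.one_le_exp (by positivity)
  have hκ1 : 1 ≤ κ := le_max_of_le_right (Real.one_le_rpow (by linarith) (by positivity))
  set Wr := (∫⁻ x in Ioo 0 b, ENNReal.ofReal (w x ^ p x)).toReal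
  have hWeq : ∫⁻ x in Ioo 0 b, ENNReal.ofReal (w x ^ p x) = ENNReal.ofReal Wr :=
    (ENNReal.ofReal_toReal hWtop).symm
  have hWr1 : 1 ≤ Wr := by simpa using ENNReal.toReal_mono hWtop hW1
  set m := κ * Wr ^ (1 / pinf)
  have hκm : κ ≤ m := le_mul_of_one_le_right (by linarith) (Real.one_le_rpow hWr1 (by positivity))
  have hm1 : 1 ≤ m := hκ1.trans hκm
  have hmpinf : m ^ pinf = κ ^ pinf * Wr := by
    rw [Real.mul_rpow (by linarith) (by positivity), one_div,
      Real.rpow_inv_rpow (by linarith) hpinf.ne']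
  have hsmall : D / √m ≤ 1 / 2 := by
    have : 2 * D ≤ √m :=
      (Real.le_sqrt (by positivity) (by linarith)).mpr ((le_max_left _ _).trans hκm)
    rw [div_le_iff₀ (Real.sqrt_pos.mpr (by linarith))]
    linarith
  have hlarge : E * m ^ (-pinf) * Wr ≤ 1 / 2 := by
    have hκE : 2 * E ≤ κ ^ pinf := calc
      2 * E = ((2 * E) ^ pinf⁻¹) ^ pinf := (Real.rpow_inv_rpow (by positivity) hpinf.ne').symm
      _ ≤ κ ^ pinf := Real.rpow_le_rpow (by positivity) (le_max_right _ _) hpinf.le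
    rw [Real.rpow_neg (by linarith), hmpinf]
    calc E * (κ ^ pinf * Wr)⁻¹ * Wr = E / κ ^ pinf := by field_simp
      _ ≤ 1 / 2 := by rw [div_le_iff₀ (by positivity)]; linarith
  calc lux p ((Ioo 0 b).indicator w) ≤ ENNReal.ofReal m := by
        refine lux_indicator_le_ofReal hw0 (fun x hx => one_pos.trans_le (hp x hx))
          (by linarith) ((setLIntegral_div_rpow_le hw0 hp hCi hΔ hP hA hgrowth hm1).trans ?_)
        rw [hWeq, ← ENNReal.ofReal_mul (by positivity),
          ← ENNReal.ofReal_add (by positivity) (by positivity)]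
        exact ENNReal.ofReal_le_one.mpr (by linarith)
    _ = ENNReal.ofReal κ * (∫⁻ x in Ioo 0 b, ENNReal.ofReal (w x ^ p x)) ^ (1 / pinf) := by
        rw [hWeq, ENNReal.ofReal_rpow_of_nonneg (by linarith) (by positivity),
          ← ENNReal.ofReal_mul (by linarith)]

lemma mul_rpow_le_lux_indicator (hw0 : ∀ x ∈ Ioi (0:ℝ), 0 ≤ w x)
    (hp : ∀ x ∈ Ioi (0:ℝ), 0 < p x) (hCi : 0 ≤ Ci)
    (hΔ : ∀ x ∈ Ioi (0:ℝ), |p x - pinf| ≤ Ci / Real.log (Real.exp 1 + x))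
    (hP : 0 < P) (hA : 0 ≤ A) (hpinf : 1 ≤ pinf)
    (hgrowth : ∀ s ≥ 1, ∫⁻ x in Ioo 0 s, ENNReal.ofReal (w x ^ p x) ≤ ENNReal.ofReal ((A * s) ^ P))
    (hN1 : 1 ≤ lux p ((Ioo 0 b).indicator w)) (hNtop : lux p ((Ioo 0 b).indicator w) ≠ ∞) :
    ENNReal.ofReal (2 * ((2 * A) ^ P + Real.exp (2 * P * Ci)) ^ (1 / pinf))⁻¹ *
        (∫⁻ x in Ioo 0 b, ENNReal.ofReal (w x ^ p x)) ^ (1 / pinf) ≤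
      lux p ((Ioo 0 b).indicator w) := by
  set D := (2 * A) ^ P
  set E := Real.exp (2 * P * Ci)
  have hDE : 0 < D + E := by positivity
  set Nr := (lux p ((Ioo 0 b).indicator w)).toReal
  have hNeq : lux p ((Ioo 0 b).indicator w) = ENNReal.ofReal Nr :=
    (ENNReal.ofReal_toReal hNtop).symm
  have hNr1 : 1 ≤ Nr := by simpa using ENNReal.toReal_mono hNtop hN1
  set m := 2 * Nr
  have hm1 : 1 ≤ m := by linarith
  have hmod : ∫⁻ x in Ioo 0 b, ENNReal.ofReal ((w x / m) ^ p x) ≤ 1 :=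
    setLIntegral_div_rpow_le_one hw0 hp (by linarith)
      (by rw [hNeq]; exact (ENNReal.ofReal_lt_ofReal_iff (by linarith)).mpr (by linarith))
  have hW : ∫⁻ x in Ioo 0 b, ENNReal.ofReal (w x ^ p x) ≤ ENNReal.ofReal ((D + E) * m ^ pinf) :=
    calc ∫⁻ x in Ioo 0 b, ENNReal.ofReal (w x ^ p x)
        ≤ ENNReal.ofReal (D * √m) + ENNReal.ofReal (E * m ^ pinf) *
            ∫⁻ x in Ioo 0 b, ENNReal.ofReal ((w x / m) ^ p x) :=
          setLIntegral_rpow_le hw0 hCi hΔ hP hA hgrowth hm1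
      _ ≤ ENNReal.ofReal (D * √m) + ENNReal.ofReal (E * m ^ pinf) := by
          gcongr
          exact mul_le_of_le_one_right' hmod
      _ ≤ ENNReal.ofReal ((D + E) * m ^ pinf) := by
          rw [← ENNReal.ofReal_add (by positivity) (by positivity)]
          refine ENNReal.ofReal_le_ofReal ?_
          have : √m ≤ m ^ pinf := by
            rw [Real.sqrt_eq_rpow]
            exact Real.rpow_le_rpow_of_exponent_le hm1 (by linarith)
          nlinarith [show (0:ℝ) ≤ D by positivity]
  calc ENNReal.ofReal (2 * (D + E) ^ (1 / pinf))⁻¹ *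
        (∫⁻ x in Ioo 0 b, ENNReal.ofReal (w x ^ p x)) ^ (1 / pinf)
      ≤ ENNReal.ofReal (2 * (D + E) ^ (1 / pinf))⁻¹ *
          ENNReal.ofReal ((D + E) * m ^ pinf) ^ (1 / pinf) := by gcongr
    _ = ENNReal.ofReal Nr := by
        rw [ENNReal.ofReal_rpow_of_nonneg (by positivity) (by positivity),
          ← ENNReal.ofReal_mul (by positivity), Real.mul_rpow hDE.le (by positivity), one_div,
          Real.rpow_rpow_inv (by linarith) (by linarith)]
        congr 1
        field_simp
        ring
    _ = lux p ((Ioo 0 b).indicator w) := hNeq.symm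

end TwoSidedBound

theorem statement12_general (p w : ℝ → ℝ) (pinf : ℝ) (hp : IsExponent p)
    (hpinf : 1 ≤ pinf) (hinf : LHinfWith p pinf) (hpm : 1 < pMinus p)
    (hw : IsWeight w) (hA : Ap0 p w) :
    ∃ c₁ > (0:ℝ), ∃ c₂ > (0:ℝ), ∀ b > (0:ℝ),
      1 ≤ lux p (indicator (Ioo (0:ℝ) b) w) →
      ENNReal.ofReal c₁ *
          (∫⁻ x in Ioo (0:ℝ) b, ENNReal.ofReal (w x ^ p x)) ^ (1/pinf) ≤
          lux p (indicator (Ioo (0:ℝ) b) w) ∧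
        lux p (indicator (Ioo (0:ℝ) b) w) ≤
          ENNReal.ofReal c₂ *
            (∫⁻ x in Ioo (0:ℝ) b, ENNReal.ofReal (w x ^ p x)) ^ (1/pinf) := by
  obtain ⟨-, hp1, hpbdd⟩ := hp
  obtain ⟨hwm, hw0, hwpos, -⟩ := hw
  obtain ⟨Ci, hCi, hΔ⟩ := hinf
  set P := pPlus p
  have hpP : ∀ x ∈ Ioi (0:ℝ), p x ≤ P := fun x hx => le_csSup hpbdd ⟨x, hx, rfl⟩
  have hp_gt : ∀ x ∈ Ioi (0:ℝ), 1 < p x := fun x hx =>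
    hpm.trans_le (csInf_le ⟨1, by rintro _ ⟨y, hy, rfl⟩; exact hp1 y hy⟩ ⟨x, hx, rfl⟩)
  have hpIoc : ∀ x ∈ Ioi (0:ℝ), p x ∈ Ioc 0 P := fun x hx =>
    ⟨one_pos.trans (hp_gt x hx), hpP x hx⟩
  have hP : 0 < P := by
    obtain ⟨h0, hle⟩ := hpIoc 1 (by norm_num)
    exact h0.trans_le hle
  obtain ⟨A, hA1, hgrowth⟩ := hA.exists_setLIntegral_rpow_le hp_gt hpP hw0 hwm hwpos
  have hA0 : 0 ≤ A := zero_le_one.trans hA1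
  refine ⟨(2 * ((2 * A) ^ P + Real.exp (2 * P * Ci)) ^ (1 / pinf))⁻¹, by positivity,
    max ((2 * (2 * A) ^ P) ^ 2) ((2 * Real.exp (2 * P * Ci)) ^ pinf⁻¹),
    lt_max_of_lt_right (by positivity), fun b hb hN => ?_⟩
  have hNtop := hA.lux_indicator_ne_top hp_gt hwm hwpos hb
  exact ⟨mul_rpow_le_lux_indicator hw0 (fun x hx => (hpIoc x hx).1) hCi.le hΔ hP hA0 hpinf
      hgrowth hN hNtop,
    lux_indicator_le_mul_rpow hw0 (fun x hx => (hp_gt x hx).le) hCi.le hΔ hP hA0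
      (by linarith) hgrowth (one_le_setLIntegral_rpow hw0 hpIoc hP hN)
      (setLIntegral_rpow_ne_top hw0 hpIoc hP hNtop)⟩

theorem statement12 (p w : ℝ → ℝ) (pinf : ℝ) (hp : IsExponent p) (h0 : LH0 p)
    (hpinf : 1 ≤ pinf) (hinf : LHinfWith p pinf) (hpm : 1 < pMinus p)
    (hw : IsWeight w) (hA : Ap0 p w) :
    ∃ c₁ > (0:ℝ), ∃ c₂ > (0:ℝ), ∀ b > (0:ℝ),
      1 ≤ lux p (indicator (Ioo (0:ℝ) b) w) →
      ENNReal.ofReal c₁ *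
          (∫⁻ x in Ioo (0:ℝ) b, ENNReal.ofReal (w x ^ p x)) ^ (1/pinf) ≤
          lux p (indicator (Ioo (0:ℝ) b) w) ∧
        lux p (indicator (Ioo (0:ℝ) b) w) ≤
          ENNReal.ofReal c₂ *
            (∫⁻ x in Ioo (0:ℝ) b, ENNReal.ofReal (w x ^ p x)) ^ (1/pinf) :=
  statement12_general p w pinf hp hpinf hinf hpm hw hA
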